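/- For every parameter h ∈ [0,1] and every natural number n ≥ 1, the mean squared displacements of the lifted tent map and the lifted V map agree: ∫_0^1 (Λ_h^n(x) − x)² dx = ∫_0^1 (V_h^n(x) − x)² dx (Lebesgue integrals). Consequently, if the diffusion coefficient D_V(h) = lim_{n→∞} (1/(2n)) ∫_0^1 (V_h^n(x) − x)² dx exists, then the corresponding limit for Λ_h exists and D_Λ(h) = D_V(h). -/

import Mathlib

open Filter

/-- The lifted V map `V_h`. -/
noncomputable def liftV (h x : ℝ) : ℝ :=
  if Int.fract x < 1/2 then (⌊x⌋ : ℝ) + (-2 * Int.fract x + 1 + h)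
  else (⌊x⌋ : ℝ) + (2 * Int.fract x - 1 - h)

/-- The lifted tent map `Λ_h`. -/
noncomputable def liftTent (h x : ℝ) : ℝ :=
  if Int.fract x < 1/2 then (⌊x⌋ : ℝ) + (2 * Int.fract x + h)
  else (⌊x⌋ : ℝ) + (-2 * Int.fract x + 2 - h)

open MeasureTheory

/-!
Away from the half-integers the two maps are conjugate by `x ↦ -x`: `V_h x = -Λ_h (-x)`. Since
`V_h` has countable fibres, almost every orbit of `V_h` avoids the half-integers forever, so
`V_hⁿ x = -Λ_hⁿ (-x)` for almost every `x`. The displacement `Λ_hⁿ x - x` of a degree-one lift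
is `1`-periodic, so its mean square over `[0,1]` equals that over `[-1,0]`, which the reflection
`x ↦ -x` turns into the mean square displacement of `V_h` over `[0,1]`.
-/

-- The breakpoints of `liftV` and `liftTent`.
def halfInts : Set ℝ := Set.range fun m : ℤ => (m : ℝ) / 2

lemma periodic_iterate_sub_self {F : ℝ → ℝ} (hF : ∀ x, F (x + 1) = F x + 1) (n : ℕ) :
    Function.Periodic (fun x => F^[n] x - x) 1 := by
  intro x
  have hcomm : Function.Commute F (· + 1) := hF
  simp only [(hcomm.iterate_left n).eq]
  ring

lemma iterate_eq_iterate_of_orbit_notMem {α : Type*} {f g : α → α} {S : Set α}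
    (hfg : ∀ x ∉ S, f x = g x) {x : α} (hx : ∀ k, f^[k] x ∉ S) (n : ℕ) :
    f^[n] x = g^[n] x := by
  induction n with
  | zero => rfl
  | succ n ih =>
    rw [Function.iterate_succ_apply', Function.iterate_succ_apply', hfg _ (hx n), ih]

lemma countable_preimage_iterate {α : Type*} {f : α → α} (hf : ∀ y, (f ⁻¹' {y}).Countable)
    {s : Set α} (hs : s.Countable) (n : ℕ) : (f^[n] ⁻¹' s).Countable := by
  induction n with
  | zero => exact hs
  | succ n ih =>
    rw [Function.iterate_succ, Set.preimage_comp, ← Set.biUnion_preimage_singleton]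
    exact ih.biUnion fun y _ => hf y

lemma liftTent_add_one (h x : ℝ) : liftTent h (x + 1) = liftTent h x + 1 := by
  unfold liftTent
  rw [Int.fract_add_one, Int.floor_add_one]
  push_cast
  split <;> ring

lemma liftV_eq_neg_liftTent_neg (h : ℝ) {x : ℝ} (hx : x ∉ halfInts) :
    liftV h x = -liftTent h (-x) := by
  have hfloor : (⌊x⌋ : ℝ) = x - Int.fract x := by rw [Int.self_sub_fract]
  have hfract_ne_zero : Int.fract x ≠ 0 := fun h0 =>
    hx ⟨2 * ⌊x⌋, by push_cast; linarith⟩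
  have hfract_ne_half : Int.fract x ≠ 1 / 2 := fun h0 =>
    hx ⟨2 * ⌊x⌋ + 1, by push_cast; linarith⟩
  have hfract_neg : Int.fract (-x) = 1 - Int.fract x := Int.fract_neg hfract_ne_zero
  have hfloor_neg : (⌊-x⌋ : ℝ) = -x - (1 - Int.fract x) := by
    rw [← hfract_neg, Int.self_sub_fract]
  unfold liftV liftTent
  rw [hfract_neg, hfloor_neg, hfloor]
  rcases lt_or_gt_of_ne hfract_ne_half with hlt | hgt
  · rw [if_pos hlt, if_neg (by linarith)]
    ring
  · rw [if_neg (by linarith), if_pos (by linarith)]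
    ring

-- On `[k, k + 1/2)` and `[k + 1/2, k + 1)` the map `liftV h` is affine of slope `∓2`.
lemma countable_liftV_fiber (h z : ℝ) : (liftV h ⁻¹' {z}).Countable := by
  refine (Set.countable_range fun p : ℤ × Bool =>
      if p.2 then (p.1 : ℝ) + ((p.1 : ℝ) + 1 + h - z) / 2
      else (p.1 : ℝ) + (z - (p.1 : ℝ) + 1 + h) / 2).mono ?_
  intro x hx
  have hfloor : (⌊x⌋ : ℝ) = x - Int.fract x := by rw [Int.self_sub_fract]
  simp only [Set.mem_preimage, Set.mem_singleton_iff, liftV] at hx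
  split_ifs at hx
  · exact ⟨(⌊x⌋, true), by simp only [if_true]; linarith⟩
  · exact ⟨(⌊x⌋, false), by simp only [Bool.false_eq_true, if_false]; linarith⟩

lemma ae_iterate_liftV_eq_neg_iterate_liftTent_neg (h : ℝ) (n : ℕ) :
    ∀ᵐ x : ℝ, (liftV h)^[n] x = -(liftTent h)^[n] (-x) := by
  have horbit : ∀ᵐ x : ℝ, ∀ k, (liftV h)^[k] x ∉ halfInts :=
    ae_all_iff.2 fun k =>
      (countable_preimage_iterate (countable_liftV_fiber h)
        (Set.countable_range _) k).ae_notMem volume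
  filter_upwards [horbit] with x hx
  have hsemiconj : Function.Semiconj Neg.neg (fun y => -liftTent h (-y)) (liftTent h) :=
    fun y => by simp
  rw [iterate_eq_iterate_of_orbit_notMem (fun y hy => liftV_eq_neg_liftTent_neg h hy) hx,
    ← (hsemiconj.iterate_right n).eq, neg_neg]

lemma integral_sq_iterate_liftTent_sub_eq_liftV (h : ℝ) (n : ℕ) :
    (∫ x in (0 : ℝ)..1, ((liftTent h)^[n] x - x) ^ 2) =
      ∫ x in (0 : ℝ)..1, ((liftV h)^[n] x - x) ^ 2 := by
  have hperiodic : Function.Periodic (fun x => ((liftTent h)^[n] x - x) ^ 2) 1 := fun x => by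
    simp only [periodic_iterate_sub_self (liftTent_add_one h) n x]
  calc (∫ x in (0 : ℝ)..1, ((liftTent h)^[n] x - x) ^ 2)
      = ∫ x in (-1 : ℝ)..0, ((liftTent h)^[n] x - x) ^ 2 := by
        simpa using hperiodic.intervalIntegral_add_eq 0 (-1)
    _ = ∫ x in (0 : ℝ)..1, ((liftTent h)^[n] (-x) - -x) ^ 2 := by
        simpa using (intervalIntegral.integral_comp_neg
          (a := 0) (b := 1) fun x => ((liftTent h)^[n] x - x) ^ 2).symm
    _ = ∫ x in (0 : ℝ)..1, ((liftV h)^[n] x - x) ^ 2 := by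
        refine intervalIntegral.integral_congr_ae ?_
        filter_upwards [ae_iterate_liftV_eq_neg_iterate_liftTent_neg h n] with x hx _
        rw [hx]
        ring

theorem stmt4_general (h : ℝ) :
    (∀ n : ℕ, 1 ≤ n →
      (∫ x in (0:ℝ)..1, ((liftTent h)^[n] x - x)^2) =
      (∫ x in (0:ℝ)..1, ((liftV h)^[n] x - x)^2)) ∧
    (∀ D : ℝ,
      Tendsto (fun n : ℕ => (1/(2*(n:ℝ))) * ∫ x in (0:ℝ)..1, ((liftV h)^[n] x - x)^2)
        atTop (nhds D) →
      Tendsto (fun n : ℕ => (1/(2*(n:ℝ))) * ∫ x in (0:ℝ)..1, ((liftTent h)^[n] x - x)^2)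
        atTop (nhds D)) := by
  refine ⟨fun n _ => integral_sq_iterate_liftTent_sub_eq_liftV h n, fun D hV => ?_⟩
  simpa only [integral_sq_iterate_liftTent_sub_eq_liftV] using hV

theorem stmt4 (h : ℝ) (hh : h ∈ Set.Icc (0:ℝ) 1) :
    (∀ n : ℕ, 1 ≤ n →
      (∫ x in (0:ℝ)..1, ((liftTent h)^[n] x - x)^2) =
      (∫ x in (0:ℝ)..1, ((liftV h)^[n] x - x)^2)) ∧
    (∀ D : ℝ,
      Tendsto (fun n : ℕ => (1/(2*(n:ℝ))) * ∫ x in (0:ℝ)..1, ((liftV h)^[n] x - x)^2)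
        atTop (nhds D) →
      Tendsto (fun n : ℕ => (1/(2*(n:ℝ))) * ∫ x in (0:ℝ)..1, ((liftTent h)^[n] x - x)^2)
        atTop (nhds D)) :=
  stmt4_general h
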